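/- Let A, B, C, D be n×n real matrices with A and D symmetric. If the 2n×2n block matrix [[A, B],[C, D]] arises with A = (1/6)H(3h₀ + h₁), B = C = (1/6)H(h₀ + h₁), D = (1/6)H(h₀ + 3h₁), where H(w) is the mass matrix weighted by a positive function w and h₀, h₁ > 0, then the block matrix is symmetric positive definite. -/

import Mathlib

open MeasureTheory Matrix
open scoped ComplexOrder

/-! With `Hₖ = H(hₖ)`, linearity of `w ↦ H(w)` turns the block matrix into `1/6` times
`[[3H₀ + H₁, H₀ + H₁], [H₀ + H₁, H₀ + 3H₁]] = diag(2H₀, 2H₁) + [[S, S], [S, S]]`,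
`S = H₀ + H₁`, the matrix form of `3X² + 2XY + Y² = 2X² + (X + Y)²`. The second summand is the
congruence `[I I]ᵀ S [I I]`, hence positive semidefinite. Each `Hₖ` is positive definite:
`xᵀ Hₖ x = ∫ hₖ X²` with `X = ∑ xᵢ ψᵢ`, which vanishes only if `X = 0` a.e., i.e. `x = 0`. -/

namespace Matrix

variable {𝕜 m n : Type*} [RCLike 𝕜] [Fintype m] [Fintype n]

theorem PosDef.fromBlocks_zero_zero {A : Matrix m m 𝕜} {D : Matrix n n 𝕜} (hA : A.PosDef)
    (hD : D.PosDef) : (fromBlocks A 0 0 D).PosDef := by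
  refine .of_dotProduct_mulVec_pos (hA.isHermitian.fromBlocks (by simp) hD.isHermitian)
    fun z hz => ?_
  obtain ⟨x, y, rfl⟩ : ∃ x y, z = Sum.elim x y := ⟨_, _, (Sum.elim_comp_inl_inr z).symm⟩
  have hstar : star (Sum.elim x y) = Sum.elim (star x) (star y) := by
    ext (i | i) <;> rfl
  simp only [fromBlocks_mulVec, zero_mulVec, add_zero, zero_add, hstar,
    sumElim_dotProduct_sumElim]
  by_cases hx : x = 0
  · have hy : y ≠ 0 := by rintro rfl; exact hz (by simp [hx])
    exact add_pos_of_nonneg_of_pos (hA.posSemidef.dotProduct_mulVec_nonneg x)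
      (hD.dotProduct_mulVec_pos hy)
  · exact add_pos_of_pos_of_nonneg (hA.dotProduct_mulVec_pos hx)
      (hD.posSemidef.dotProduct_mulVec_nonneg y)

theorem PosSemidef.fromBlocks_self [DecidableEq n] {A : Matrix n n 𝕜} (hA : A.PosSemidef) :
    (fromBlocks A A A A).PosSemidef := by
  have h := hA.conjTranspose_mul_mul_same (fromCols (1 : Matrix n n 𝕜) (1 : Matrix n n 𝕜))
  rwa [conjTranspose_fromCols_eq_fromRows_conjTranspose, conjTranspose_one, fromRows_mul,
    fromRows_mul_fromCols, one_mul, mul_one] at h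

theorem PosDef.fromBlocks_three_one_one_three [DecidableEq n] {A₀ A₁ : Matrix n n 𝕜}
    (hA₀ : A₀.PosDef) (hA₁ : A₁.PosDef) :
    (fromBlocks ((3 : 𝕜) • A₀ + A₁) (A₀ + A₁) (A₀ + A₁) (A₀ + (3 : 𝕜) • A₁)).PosDef := by
  have hsplit : fromBlocks ((3 : 𝕜) • A₀ + A₁) (A₀ + A₁) (A₀ + A₁) (A₀ + (3 : 𝕜) • A₁)
      = fromBlocks ((2 : 𝕜) • A₀) 0 0 ((2 : 𝕜) • A₁)
        + fromBlocks (A₀ + A₁) (A₀ + A₁) (A₀ + A₁) (A₀ + A₁) := by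
    rw [fromBlocks_add]; congr 1 <;> module
  rw [hsplit]
  exact (PosDef.fromBlocks_zero_zero (hA₀.smul two_pos) (hA₁.smul two_pos)).add_posSemidef
    (hA₀.add hA₁).posSemidef.fromBlocks_self

end Matrix

theorem mul_sum_mul_sum_eq_sum_sum {R ι : Type*} [CommSemiring R] [Fintype ι] (c : R)
    (f x y : ι → R) :
    c * (∑ i, x i * f i) * (∑ j, y j * f j) = ∑ i, ∑ j, x i * y j * (c * f i * f j) := by
  rw [mul_assoc, Finset.sum_mul_sum, Finset.mul_sum]
  refine Finset.sum_congr rfl fun i _ => ?_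
  rw [Finset.mul_sum]
  exact Finset.sum_congr rfl fun j _ => by ring

section MassMatrix

variable {Ω ι : Type*} [MeasurableSpace Ω] (μ : Measure Ω) (ψ : ι → Ω → ℝ)

noncomputable def massMatrix (w : Ω → ℝ) : Matrix ι ι ℝ :=
  of fun i j => ∫ ω, w ω * ψ i ω * ψ j ω ∂μ

variable {μ ψ}

theorem isHermitian_massMatrix (w : Ω → ℝ) : (massMatrix μ ψ w).IsHermitian := by
  ext i j
  simp only [conjTranspose_apply, star_trivial, massMatrix, of_apply]
  simp_rw [mul_right_comm]

theorem massMatrix_eq_smul_add_smul {w w₀ w₁ : Ω → ℝ} {a b : ℝ}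
    (hw : ∀ ω, w ω = a * w₀ ω + b * w₁ ω)
    (hint₀ : ∀ i j, Integrable (fun ω => w₀ ω * ψ i ω * ψ j ω) μ)
    (hint₁ : ∀ i j, Integrable (fun ω => w₁ ω * ψ i ω * ψ j ω) μ) :
    massMatrix μ ψ w = a • massMatrix μ ψ w₀ + b • massMatrix μ ψ w₁ := by
  ext i j
  have hsplit : (fun ω => w ω * ψ i ω * ψ j ω)
      = fun ω => a * (w₀ ω * ψ i ω * ψ j ω) + b * (w₁ ω * ψ i ω * ψ j ω) := by
    funext ω; rw [hw]; ring
  simp only [massMatrix, of_apply, Matrix.add_apply, Matrix.smul_apply, smul_eq_mul, hsplit,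
    integral_add ((hint₀ i j).const_mul a) ((hint₁ i j).const_mul b), integral_const_mul]

variable [Fintype ι] {w : Ω → ℝ} (hint : ∀ i j, Integrable (fun ω => w ω * ψ i ω * ψ j ω) μ)
include hint

theorem integrable_mul_sum_mul_sum (x y : ι → ℝ) :
    Integrable (fun ω => w ω * (∑ i, x i * ψ i ω) * (∑ j, y j * ψ j ω)) μ := by
  simp only [mul_sum_mul_sum_eq_sum_sum]
  exact integrable_finsetSum _ fun i _ => integrable_finsetSum _ fun j _ =>
    (hint i j).const_mul _

theorem dotProduct_massMatrix_mulVec (x y : ι → ℝ) :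
    x ⬝ᵥ massMatrix μ ψ w *ᵥ y = ∫ ω, w ω * (∑ i, x i * ψ i ω) * (∑ j, y j * ψ j ω) ∂μ := by
  simp only [mul_sum_mul_sum_eq_sum_sum]
  rw [integral_finsetSum _ fun i _ => integrable_finsetSum _ fun j _ =>
    (hint i j).const_mul _]
  simp only [integral_finsetSum _ fun j _ => (hint _ j).const_mul _, integral_const_mul,
    dotProduct, mulVec, massMatrix, of_apply, Finset.mul_sum]
  exact Finset.sum_congr rfl fun i _ => Finset.sum_congr rfl fun j _ => by ring

theorem posDef_massMatrix (hw : ∀ ω, 0 < w ω)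
    (hindep : ∀ x : ι → ℝ, (∀ᵐ ω ∂μ, ∑ i, x i * ψ i ω = 0) → x = 0) :
    (massMatrix μ ψ w).PosDef := by
  refine .of_dotProduct_mulVec_pos (isHermitian_massMatrix w) fun x hx => ?_
  rw [star_trivial, dotProduct_massMatrix_mulVec hint]
  set X := fun ω => ∑ i, x i * ψ i ω
  have hnonneg : ∀ ω, 0 ≤ w ω * X ω * X ω := fun ω => by
    rw [mul_assoc]; exact mul_nonneg (hw ω).le (mul_self_nonneg _)
  refine (integral_nonneg hnonneg).lt_of_ne fun hzero => hx (hindep x ?_)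
  filter_upwards [(integral_eq_zero_iff_of_nonneg hnonneg
    (integrable_mul_sum_mul_sum hint x x)).mp hzero.symm] with ω hω
  simpa [mul_assoc, (hw ω).ne'] using hω

end MassMatrix

theorem exact_enstrophy_block_matrix_posDef_general
    {Ω : Type*} [MeasurableSpace Ω] (μ : Measure Ω)
    {n : ℕ} (ψ : Fin n → Ω → ℝ)
    (h₀ h₁ : Ω → ℝ)
    (hpos₀ : ∀ ω, 0 < h₀ ω) (hpos₁ : ∀ ω, 0 < h₁ ω)
    (hint₀ : ∀ i j, Integrable (fun ω => h₀ ω * ψ i ω * ψ j ω) μ)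
    (hint₁ : ∀ i j, Integrable (fun ω => h₁ ω * ψ i ω * ψ j ω) μ)
    (hindep : ∀ x : Fin n → ℝ,
      (∀ᵐ ω ∂μ, ∑ i, x i * ψ i ω = 0) → x = 0)
    (H : (Ω → ℝ) → Matrix (Fin n) (Fin n) ℝ)
    (hH : ∀ w i j, H w i j = ∫ ω, w ω * ψ i ω * ψ j ω ∂μ) :
    (Matrix.fromBlocks
      ((1/6 : ℝ) • H (fun ω => 3 * h₀ ω + h₁ ω))
      ((1/6 : ℝ) • H (fun ω => h₀ ω + h₁ ω))
      ((1/6 : ℝ) • H (fun ω => h₀ ω + h₁ ω))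
      ((1/6 : ℝ) • H (fun ω => h₀ ω + 3 * h₁ ω))).PosDef := by
  obtain rfl : H = massMatrix μ ψ := funext fun w => Matrix.ext (hH w)
  have hA : massMatrix μ ψ (fun ω => 3 * h₀ ω + h₁ ω)
      = (3 : ℝ) • massMatrix μ ψ h₀ + massMatrix μ ψ h₁ := by
    simpa using massMatrix_eq_smul_add_smul (a := 3) (b := 1) (fun ω => by ring) hint₀ hint₁
  have hB : massMatrix μ ψ (fun ω => h₀ ω + h₁ ω) = massMatrix μ ψ h₀ + massMatrix μ ψ h₁ := by
    simpa using massMatrix_eq_smul_add_smul (a := 1) (b := 1) (fun ω => by ring) hint₀ hint₁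
  have hD : massMatrix μ ψ (fun ω => h₀ ω + 3 * h₁ ω)
      = massMatrix μ ψ h₀ + (3 : ℝ) • massMatrix μ ψ h₁ := by
    simpa using massMatrix_eq_smul_add_smul (a := 1) (b := 3) (fun ω => by ring) hint₀ hint₁
  rw [hA, hB, hD, ← fromBlocks_smul]
  exact ((posDef_massMatrix hint₀ hpos₀ hindep).fromBlocks_three_one_one_three
    (posDef_massMatrix hint₁ hpos₁ hindep)).smul (by norm_num)

/-- The block system of the piecewise-linear-in-time exact potential enstrophy
formulation is symmetric positive definite: with `H(w)ᵢⱼ = ∫ w ψᵢ ψⱼ` the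
`w`-weighted Galerkin mass matrix for linearly independent basis functions `ψ`,
and pointwise positive `h₀, h₁`, the block matrix
`[[ (1/6)H(3h₀+h₁), (1/6)H(h₀+h₁) ], [ (1/6)H(h₀+h₁), (1/6)H(h₀+3h₁) ]]`
is positive definite. -/
theorem exact_enstrophy_block_matrix_posDef
    {Ω : Type*} [MeasurableSpace Ω] (μ : Measure Ω)
    {n : ℕ} (ψ : Fin n → Ω → ℝ)
    (h₀ h₁ : Ω → ℝ)
    (hmeas : ∀ i, Measurable (ψ i))
    (hmeas₀ : Measurable h₀) (hmeas₁ : Measurable h₁)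
    (hpos₀ : ∀ ω, 0 < h₀ ω) (hpos₁ : ∀ ω, 0 < h₁ ω)
    (hint₀ : ∀ i j, Integrable (fun ω => h₀ ω * ψ i ω * ψ j ω) μ)
    (hint₁ : ∀ i j, Integrable (fun ω => h₁ ω * ψ i ω * ψ j ω) μ)
    (hindep : ∀ x : Fin n → ℝ,
      (∀ᵐ ω ∂μ, ∑ i, x i * ψ i ω = 0) → x = 0)
    (H : (Ω → ℝ) → Matrix (Fin n) (Fin n) ℝ)
    (hH : ∀ w i j, H w i j = ∫ ω, w ω * ψ i ω * ψ j ω ∂μ) :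
    (Matrix.fromBlocks
      ((1/6 : ℝ) • H (fun ω => 3 * h₀ ω + h₁ ω))
      ((1/6 : ℝ) • H (fun ω => h₀ ω + h₁ ω))
      ((1/6 : ℝ) • H (fun ω => h₀ ω + h₁ ω))
      ((1/6 : ℝ) • H (fun ω => h₀ ω + 3 * h₁ ω))).PosDef :=
  exact_enstrophy_block_matrix_posDef_general μ ψ h₀ h₁ hpos₀ hpos₁ hint₀ hint₁ hindep H hH
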